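/- For c ∈ ℂ with |c| = 1, define a_c(z) = ¼·ln(|z|² + 1) and u_c(z) = (z, c)/√(|z|² + 1), and write z = s + it. Then for every z ∈ ℂ the map ũ_c = (a_c, u_c) satisfies the pseudo-holomorphic curve equations: (i) ∂_s a_c(z) = λ₀|_{u_c(z)}(∂_t u_c(z)) and ∂_t a_c(z) = −λ₀|_{u_c(z)}(∂_s u_c(z)); (ii) the projections π(∂_s u_c(z)) and π(∂_t u_c(z)) lie in the span of X₁(u_c(z)) and X₂(u_c(z)), and π(∂_s u_c(z)) + J_{u_c(z)}(π(∂_t u_c(z))) = 0. -/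

import Mathlib

/-!
Everything holds for `ũ = (¼ log |f|², f / |f|)` with `f : ℂ → ℂ²` holomorphic and nonvanishing;
`ũ_c` is the case `f z = (z, c)`. With `p = f z`, `N = |p|²` and `⟨·,·⟩` the Hermitian product,
the derivative of `p ↦ p / |p|` is `w ↦ (w - (Re ⟨p, w⟩ / N) p) / |p|`. Hence
`λ₀(du(v)) = Im ⟨p, df(v)⟩ / 2N` and `da(v) = Re ⟨p, df(v)⟩ / 2N`, and `df(I) = I • df(1)` gives (i).
The Reeb projection of `du(v)` is the Hermitian-orthogonal projection of `df(v) / |p|` onto `p^⊥`,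
which is complex linear in `v`; and `p^⊥ = ξ₀` with `J` acting as multiplication by `I`, giving (ii).
-/

open Complex

/-- The Liouville form: `Λ₀|_p(v) = ½(x₁v_{y₁} − y₁v_{x₁} + x₂v_{y₂} − y₂v_{x₂})`. -/
noncomputable def Λ0 (p v : ℂ × ℂ) : ℝ :=
  (1 / 2) * (p.1.re * v.1.im - p.1.im * v.1.re + p.2.re * v.2.im - p.2.im * v.2.re)

/-- `X₁(p) = (y₂, x₂, −y₁, −x₁)` in complex notation. -/
def X1 (p : ℂ × ℂ) : ℂ × ℂ :=
  (Complex.I * (starRingEnd ℂ) p.2, -Complex.I * (starRingEnd ℂ) p.1)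

/-- `X₂(p) = (−x₂, y₂, x₁, −y₁)` in complex notation. -/
def X2 (p : ℂ × ℂ) : ℂ × ℂ :=
  (-(starRingEnd ℂ) p.2, (starRingEnd ℂ) p.1)

/-- The Reeb vector field `R₀(p) = 2ip`. -/
def R0 (p : ℂ × ℂ) : ℂ × ℂ := (2 * Complex.I * p.1, 2 * Complex.I * p.2)

/-- The projection along the Reeb vector field: `π(v) = v − λ₀|_p(v)·R₀(p)`. -/
noncomputable def projξ (p v : ℂ × ℂ) : ℂ × ℂ := v - Λ0 p v • R0 p

/-- `a_c(z) = ¼ ln(|z|² + 1)`. -/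
noncomputable def ac (z : ℂ) : ℝ := (1 / 4) * Real.log (‖z‖ ^ 2 + 1)

/-- `u_c(z) = (z, c)/√(|z|² + 1)`. -/
noncomputable def uc (c : ℂ) (z : ℂ) : ℂ × ℂ :=
  (z / Complex.ofReal (Real.sqrt (‖z‖ ^ 2 + 1)),
   c / Complex.ofReal (Real.sqrt (‖z‖ ^ 2 + 1)))

open ComplexConjugate

def herm (p q : ℂ × ℂ) : ℂ := conj p.1 * q.1 + conj p.2 * q.2

noncomputable def normSq₂ (p : ℂ × ℂ) : ℝ := ‖p.1‖ ^ 2 + ‖p.2‖ ^ 2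

section Herm

variable (p q w : ℂ × ℂ)

@[simp]
lemma herm_sub_right : herm p (q - w) = herm p q - herm p w := by
  simp only [herm, Prod.fst_sub, Prod.snd_sub]; ring

@[simp]
lemma herm_smul_right (c : ℂ) : herm p (c • q) = c * herm p q := by
  simp only [herm, Prod.smul_fst, Prod.smul_snd, smul_eq_mul]; ring

@[simp]
lemma herm_real_smul_right (r : ℝ) : herm p (r • q) = r * herm p q := by
  simp only [herm, Prod.smul_fst, Prod.smul_snd, Complex.real_smul]; ring

@[simp]
lemma herm_real_smul_left (r : ℝ) : herm (r • p) q = r * herm p q := by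
  simp only [herm, Prod.smul_fst, Prod.smul_snd, Complex.real_smul, map_mul, Complex.conj_ofReal]
  ring

lemma herm_self : herm p p = normSq₂ p := by
  simp only [normSq₂, herm, ← Complex.normSq_eq_norm_sq]
  push_cast
  rw [Complex.normSq_eq_conj_mul_self, Complex.normSq_eq_conj_mul_self]

lemma Λ0_eq_im_herm : Λ0 p q = (herm p q).im / 2 := by
  simp only [Λ0, herm, Complex.add_im, Complex.mul_im, Complex.conj_re, Complex.conj_im]
  ring

lemma projξ_eq_sub_im_herm_smul : projξ p q = q - (herm p q).im • (I • p) := by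
  rw [projξ, Λ0_eq_im_herm, R0]
  ext <;> simp <;> ring

end Herm

lemma normSq₂_real_smul (r : ℝ) (p : ℂ × ℂ) : normSq₂ (r • p) = r ^ 2 * normSq₂ p := by
  simp only [normSq₂, Prod.smul_fst, Prod.smul_snd, norm_smul, mul_pow, Real.norm_eq_abs, sq_abs]
  ring

lemma normSq₂_pos {p : ℂ × ℂ} (hp : p ≠ 0) : 0 < normSq₂ p := by
  rcases p with ⟨p₁, p₂⟩
  by_cases h : p₁ = 0
  · have : p₂ ≠ 0 := by rintro rfl; exact hp (by simp [h])
    unfold normSq₂; positivity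
  · unfold normSq₂; positivity

noncomputable def reHermCLM (p : ℂ × ℂ) : ℂ × ℂ →L[ℝ] ℝ :=
  (innerSL ℝ p.1).comp (ContinuousLinearMap.fst ℝ ℂ ℂ) +
    (innerSL ℝ p.2).comp (ContinuousLinearMap.snd ℝ ℂ ℂ)

@[simp]
lemma reHermCLM_apply (p w : ℂ × ℂ) : reHermCLM p w = (herm p w).re := by
  simp [reHermCLM, herm, Complex.inner, mul_comm]

lemma hasFDerivAt_normSq₂ (p : ℂ × ℂ) : HasFDerivAt normSq₂ (2 • reHermCLM p) p := by
  have h := (hasFDerivAt_fst (p := p)).norm_sq.fun_add hasFDerivAt_snd.norm_sq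
  rw [← smul_add] at h
  exact h

noncomputable def unitSphereProj (p : ℂ × ℂ) : ℂ × ℂ := (√(normSq₂ p))⁻¹ • p

noncomputable def logRadius (p : ℂ × ℂ) : ℝ := Real.log (normSq₂ p) / 4

section UnitSphereProj

variable {p : ℂ × ℂ} (hp : p ≠ 0)
include hp

lemma differentiableAt_unitSphereProj : DifferentiableAt ℝ unitSphereProj p :=
  have hN := normSq₂_pos hp
  (((hasFDerivAt_normSq₂ p).differentiableAt.sqrt hN.ne').inv (Real.sqrt_pos.2 hN).ne').fun_smul
    differentiableAt_id

lemma fderiv_unitSphereProj_apply (w : ℂ × ℂ) :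
    fderiv ℝ unitSphereProj p w =
      (√(normSq₂ p))⁻¹ • w - ((herm p w).re / (normSq₂ p * √(normSq₂ p))) • p := by
  have hN := normSq₂_pos hp
  have hs : √(normSq₂ p) ≠ 0 := (Real.sqrt_pos.2 hN).ne'
  have h : HasFDerivAt unitSphereProj _ p :=
    (((Real.hasDerivAt_sqrt hN.ne').inv hs).comp_hasFDerivAt p (hasFDerivAt_normSq₂ p)).fun_smul
      (hasFDerivAt_id p)
  rw [h.fderiv]
  simp only [Function.comp_apply, Pi.inv_apply, add_apply, smul_apply, ContinuousLinearMap.id_apply,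
    ContinuousLinearMap.smulRight_apply, reHermCLM_apply, nsmul_eq_mul, Nat.cast_ofNat, smul_eq_mul]
  rw [sub_eq_add_neg, ← neg_smul, Real.sq_sqrt hN.le]
  congr 2
  field_simp

lemma differentiableAt_logRadius : DifferentiableAt ℝ logRadius p := by
  show DifferentiableAt ℝ (fun p => Real.log (normSq₂ p) * 4⁻¹) p
  exact ((hasFDerivAt_normSq₂ p).differentiableAt.log (normSq₂_pos hp).ne').mul_const _

lemma fderiv_logRadius_apply (w : ℂ × ℂ) :
    fderiv ℝ logRadius p w = (herm p w).re / (2 * normSq₂ p) := by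
  have h : HasFDerivAt logRadius _ p :=
    ((hasFDerivAt_normSq₂ p).log (normSq₂_pos hp).ne').mul_const 4⁻¹
  rw [h.fderiv]
  simp only [smul_apply, reHermCLM_apply, nsmul_eq_mul, Nat.cast_ofNat, smul_eq_mul]
  field_simp
  ring

lemma normSq₂_unitSphereProj : normSq₂ (unitSphereProj p) = 1 := by
  have hN := normSq₂_pos hp
  rw [unitSphereProj, normSq₂_real_smul, inv_pow, Real.sq_sqrt hN.le, inv_mul_cancel₀ hN.ne']

lemma herm_unitSphereProj_fderiv (w : ℂ × ℂ) :
    herm (unitSphereProj p) (fderiv ℝ unitSphereProj p w) =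
      ((herm p w).im / normSq₂ p : ℝ) * I := by
  have hN := normSq₂_pos hp
  have hs : (√(normSq₂ p) : ℂ) ^ 2 = normSq₂ p := by exact_mod_cast Real.sq_sqrt hN.le
  have hs0 : (√(normSq₂ p) : ℂ) ≠ 0 := by exact_mod_cast (Real.sqrt_pos.2 hN).ne'
  have hN0 : (normSq₂ p : ℂ) ≠ 0 := by exact_mod_cast hN.ne'
  rw [fderiv_unitSphereProj_apply hp, unitSphereProj]
  simp only [herm_sub_right, herm_real_smul_left, herm_real_smul_right, herm_self]
  push_cast
  field_simp
  rw [hs]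
  linear_combination (normSq₂ p : ℂ) * (Complex.re_add_im (herm p w)).symm

lemma projξ_unitSphereProj_fderiv (w : ℂ × ℂ) :
    projξ (unitSphereProj p) (fderiv ℝ unitSphereProj p w) =
      (√(normSq₂ p))⁻¹ • (w - (herm p w / normSq₂ p) • p) := by
  rw [projξ_eq_sub_im_herm_smul, herm_unitSphereProj_fderiv hp, Complex.mul_I_im,
    Complex.ofReal_re, fderiv_unitSphereProj_apply hp, unitSphereProj]
  have hh := Complex.re_add_im (herm p w)
  ext1 <;> simp only [Prod.fst_sub, Prod.snd_sub, Prod.smul_fst, Prod.smul_snd, Complex.real_smul,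
    smul_eq_mul] <;> push_cast <;> field_simp
  · linear_combination (-p.1 / (normSq₂ p * √(normSq₂ p)) : ℂ) * hh
  · linear_combination (-p.2 / (normSq₂ p * √(normSq₂ p)) : ℂ) * hh

lemma projξ_unitSphereProj_fderiv_smul (c : ℂ) (w : ℂ × ℂ) :
    projξ (unitSphereProj p) (fderiv ℝ unitSphereProj p (c • w)) =
      c • projξ (unitSphereProj p) (fderiv ℝ unitSphereProj p w) := by
  simp only [projξ_unitSphereProj_fderiv hp, herm_smul_right, mul_div_assoc, mul_smul]
  module

lemma herm_unitSphereProj_projξ (w : ℂ × ℂ) :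
    herm (unitSphereProj p) (projξ (unitSphereProj p) (fderiv ℝ unitSphereProj p w)) = 0 := by
  have hN0 : (normSq₂ p : ℂ) ≠ 0 := by exact_mod_cast (normSq₂_pos hp).ne'
  rw [projξ_unitSphereProj_fderiv hp, unitSphereProj]
  simp only [herm_real_smul_left, herm_real_smul_right, herm_sub_right, herm_smul_right, herm_self]
  field_simp
  ring

lemma Λ0_unitSphereProj_fderiv (w : ℂ × ℂ) :
    Λ0 (unitSphereProj p) (fderiv ℝ unitSphereProj p w) = (herm p w).im / (2 * normSq₂ p) := by
  rw [Λ0_eq_im_herm, herm_unitSphereProj_fderiv hp, Complex.mul_I_im, Complex.ofReal_re, div_div,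
    mul_comm]

end UnitSphereProj

lemma I_smul_X1 (p : ℂ × ℂ) : I • X1 p = X2 p := by
  ext1 <;> simp [X1, X2, ← mul_assoc]

lemma I_smul_X2 (p : ℂ × ℂ) : I • X2 p = -X1 p := by
  ext1 <;> simp [X1, X2]

lemma exists_eq_smul_X1_sub_smul_X2 {p q : ℂ × ℂ} (hp : normSq₂ p = 1) (hq : herm p q = 0) :
    ∃ a b : ℝ, I • q = a • X1 p + b • X2 p ∧ q = b • X1 p - a • X2 p := by
  -- `q ⊥ p` lies on the complex line spanned by `(p̄₂, -p̄₁)`, with coordinate `w`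
  set w := q.1 * p.2 - q.2 * p.1
  have hw := Complex.re_add_im w
  have hp' : herm p p = 1 := by rw [herm_self, hp, Complex.ofReal_one]
  simp only [herm] at hq hp'
  have hq' : q = w.im • X1 p - w.re • X2 p := by
    ext1 <;> simp only [X1, X2, Prod.fst_sub, Prod.snd_sub, Prod.smul_fst, Prod.smul_snd,
      Complex.real_smul]
    · linear_combination (-conj p.2) * hw + (-q.1) * hp' + p.1 * hq
    · linear_combination (conj p.1) * hw + (-q.2) * hp' + p.2 * hq
  refine ⟨w.re, w.im, ?_, hq'⟩
  rw [hq', smul_sub, smul_comm I (w.im : ℝ), smul_comm I (w.re : ℝ), I_smul_X1, I_smul_X2]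
  module

lemma fderiv_comp_apply_of_hasDerivAt {E F : Type*} [NormedAddCommGroup E] [NormedSpace ℂ E]
    [NormedAddCommGroup F] [NormedSpace ℝ F] {g : E → F} {f : ℂ → E} {f' : E} {z : ℂ}
    (hg : DifferentiableAt ℝ g (f z)) (hf : HasDerivAt f f' z) (v : ℂ) :
    fderiv ℝ (g ∘ f) z v = fderiv ℝ g (f z) (v • f') := by
  have hfR := hf.hasFDerivAt.restrictScalars ℝ
  rw [fderiv_comp z hg hfR.differentiableAt, ContinuousLinearMap.comp_apply, hfR.fderiv]
  simp

/-- With `z = s + it`, `∂ₛ` and `∂ₜ` are the derivatives along `1` and `I`; the last clause is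
`π(∂ₛu) + J π(∂ₜu) = 0` for `J(αX₁ + βX₂) = αX₂ - βX₁`. -/
def IsPseudoHolomorphicAt (a : ℂ → ℝ) (u : ℂ → ℂ × ℂ) (z : ℂ) : Prop :=
  fderiv ℝ a z 1 = Λ0 (u z) (fderiv ℝ u z I) ∧
  fderiv ℝ a z I = -Λ0 (u z) (fderiv ℝ u z 1) ∧
  ∃ α β : ℝ,
    projξ (u z) (fderiv ℝ u z I) = α • X1 (u z) + β • X2 (u z) ∧
    projξ (u z) (fderiv ℝ u z 1) = β • X1 (u z) - α • X2 (u z)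

theorem isPseudoHolomorphicAt_comp {f : ℂ → ℂ × ℂ} {f' : ℂ × ℂ} {z : ℂ} (hf : HasDerivAt f f' z)
    (hfz : f z ≠ 0) : IsPseudoHolomorphicAt (logRadius ∘ f) (unitSphereProj ∘ f) z := by
  have du := fderiv_comp_apply_of_hasDerivAt (differentiableAt_unitSphereProj hfz) hf
  have da := fderiv_comp_apply_of_hasDerivAt (differentiableAt_logRadius hfz) hf
  obtain ⟨α, β, hI, h1⟩ := exists_eq_smul_X1_sub_smul_X2 (normSq₂_unitSphereProj hfz)
    (herm_unitSphereProj_projξ hfz f')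
  refine ⟨?_, ?_, α, β, ?_, ?_⟩
  · rw [da, du, fderiv_logRadius_apply hfz, Function.comp_apply, Λ0_unitSphereProj_fderiv hfz]
    simp
  · rw [da, du, fderiv_logRadius_apply hfz, Function.comp_apply, Λ0_unitSphereProj_fderiv hfz]
    simp [neg_div]
  · rw [du, Function.comp_apply, projξ_unitSphereProj_fderiv_smul hfz, hI]
  · rw [du, one_smul, Function.comp_apply, h1]

lemma normSq₂_mk_of_norm_eq_one {c : ℂ} (hc : ‖c‖ = 1) (w : ℂ) : normSq₂ (w, c) = ‖w‖ ^ 2 + 1 := by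
  rw [normSq₂, hc, one_pow]

lemma logRadius_comp_mk {c : ℂ} (hc : ‖c‖ = 1) : logRadius ∘ (fun w => (w, c)) = ac := by
  ext w
  rw [Function.comp_apply, logRadius, normSq₂_mk_of_norm_eq_one hc, ac]
  ring

lemma unitSphereProj_comp_mk {c : ℂ} (hc : ‖c‖ = 1) : unitSphereProj ∘ (fun w => (w, c)) = uc c := by
  ext1 w
  rw [Function.comp_apply, unitSphereProj, normSq₂_mk_of_norm_eq_one hc, uc]
  ext1 <;> simp [Complex.real_smul, div_eq_inv_mul]

/-- With `z = s + it`, the map `ũ_c = (a_c, u_c)` satisfies the pseudo-holomorphic curve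
equations: (i) `∂ₛa_c = λ₀(∂ₜu_c)` and `∂ₜa_c = −λ₀(∂ₛu_c)`; (ii) the projections
`π(∂ₛu_c)` and `π(∂ₜu_c)` lie in the span of `X₁, X₂` at `u_c(z)` and
`π(∂ₛu_c) + J(π(∂ₜu_c)) = 0`, where `J(aX₁ + bX₂) = aX₂ − bX₁`. -/
theorem stmt_18 (c : ℂ) (hc : ‖c‖ = 1) (z : ℂ) :
    (fderiv ℝ ac z 1 = Λ0 (uc c z) (fderiv ℝ (uc c) z Complex.I)) ∧
    (fderiv ℝ ac z Complex.I = -Λ0 (uc c z) (fderiv ℝ (uc c) z 1)) ∧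
    (∃ a b : ℝ,
      projξ (uc c z) (fderiv ℝ (uc c) z Complex.I) =
        a • X1 (uc c z) + b • X2 (uc c z) ∧
      projξ (uc c z) (fderiv ℝ (uc c) z 1) =
        b • X1 (uc c z) - a • X2 (uc c z)) := by
  have hf : HasDerivAt (fun w => (w, c)) ((1 : ℂ), (0 : ℂ)) z :=
    (hasDerivAt_id z).prodMk (hasDerivAt_const z c)
  have hc0 : c ≠ 0 := norm_ne_zero_iff.1 (hc.symm ▸ one_ne_zero)
  have h := isPseudoHolomorphicAt_comp hf (by simp [hc0])
  rwa [logRadius_comp_mk hc, unitSphereProj_comp_mk hc] at h
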